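/- arXiv:1701.06257 — 2 statements merged into one kernel-verified Lean document; each statement's English description precedes it below -/
import Mathlib

section
/- Let f : ℤ⁺ → ℂ be an arbitrary arithmetic function and let n ≥ 1. The matrix A_n is invertible, and the column vector (f(1), f(2), …, f(n))ᵀ equals A_n^{−1} · (B_{g_f,0}, B_{g_f,1}, …, B_{g_f,n−1})ᵀ; equivalently, A_n · (f(1), …, f(n))ᵀ = (B_{g_f,0}, …, B_{g_f,n−1})ᵀ. -/
/-!
STATEMENT 1: For an arbitrary arithmetic function `f : ℤ⁺ → ℂ` and `n ≥ 1`, the matrix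
`A_n` (with `(i,j)` entry `a_{i,j}` for `j ≤ i` and `0` for `j > i`) is invertible, and
`(f(1), …, f(n))ᵀ = A_n⁻¹ ⬝ (B_{g_f,0}, …, B_{g_f,n-1})ᵀ`; equivalently
`A_n ⬝ (f(1), …, f(n))ᵀ = (B_{g_f,0}, …, B_{g_f,n-1})ᵀ`.
-/

/-- `g_f(m) = ∑_{d ∣ m} f(d)` for `m ≥ 1`, and `0` for `m ≤ 0`. -/
noncomputable def gf (f : ℕ → ℂ) (m : ℤ) : ℂ :=
  if 1 ≤ m then ∑ d ∈ (m.toNat).divisors, f d else 0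

/-- `c(m) = (-1)^k` when `m = k(3k+1)/2` or `m = k(3k-1)/2` for some integer `k ≥ 0`,
and `c(m) = 0` otherwise. -/
def pentCoeff (m : ℤ) : ℤ :=
  ∑ k ∈ Finset.range (m.toNat + 1),
    ((if 2 * m = (k : ℤ) * (3 * k + 1) then (-1 : ℤ) ^ k else 0) +
      (if 2 * m = (k : ℤ) * (3 * k - 1) ∧ 1 ≤ k then (-1 : ℤ) ^ k else 0))

/-- `a_{n,i} := ∑_{s=0}^{⌊n/i⌋ - 1} c(n - (s+1) i)`. -/
def aEnt (n i : ℕ) : ℤ :=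
  ∑ s ∈ Finset.range (n / i), pentCoeff ((n : ℤ) - (s + 1) * i)

/-- The matrix `A_n`, with `(i,j)` entry `a_{i,j}` for `1 ≤ j ≤ i ≤ n` and `0` for `j > i`
(indices shifted to `Fin n`). -/
noncomputable def Amat (n : ℕ) : Matrix (Fin n) (Fin n) ℂ :=
  fun i j => if (j : ℕ) ≤ (i : ℕ) then (aEnt ((i : ℕ) + 1) ((j : ℕ) + 1) : ℂ) else 0

/-- `B_{g,m} := g(m+1) - ∑_{b = ±1} ∑_{k ≥ 1, k(3k+b)/2 ≤ m} (-1)^(k+1) g(m+1-k(3k+b)/2)`,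
here specialized to `g = g_f`. -/
noncomputable def Bgf (f : ℕ → ℂ) (m : ℕ) : ℂ :=
  gf f ((m : ℤ) + 1) -
    ∑ b ∈ ({1, -1} : Finset ℤ), ∑ k ∈ Finset.Icc 1 m,
      if (k : ℤ) * (3 * k + b) ≤ 2 * m then
        (-1 : ℂ) ^ (k + 1) * gf f ((m : ℤ) + 1 - (k : ℤ) * (3 * k + b) / 2)
      else 0

def pent1 (k : ℕ) : ℕ := k * (3 * k + 1) / 2

def pent2 (k : ℕ) : ℕ := pent1 k - k

lemma two_dvd_pent (k : ℕ) : 2 ∣ k * (3 * k + 1) := by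
  rcases Nat.even_or_odd k with h | h
  · exact Dvd.dvd.mul_right h.two_dvd _
  · have : Even (3 * k + 1) := by rcases h with ⟨c, hc⟩; exact ⟨3 * c + 2, by omega⟩
    exact Dvd.dvd.mul_left this.two_dvd _

lemma pent1_spec (k : ℕ) : 2 * pent1 k = k * (3 * k + 1) := by
  obtain ⟨t, ht⟩ := two_dvd_pent k
  have : pent1 k = t := by unfold pent1; omega
  omega

lemma pent1_ge (k : ℕ) : k ≤ pent1 k := by
  have := pent1_spec k; nlinarith

lemma pent2_spec (k : ℕ) : 2 * pent2 k + 2 * k = k * (3 * k + 1) := by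
  have h1 := pent1_spec k
  have h2 := pent1_ge k
  unfold pent2; omega

lemma pent2_ge (k : ℕ) (hk : 1 ≤ k) : k ≤ pent2 k := by
  have := pent2_spec k; nlinarith

lemma pent1_specZ (k : ℕ) : 2 * (pent1 k : ℤ) = (k : ℤ) * (3 * k + 1) := by
  have h : ((2 * pent1 k : ℕ) : ℤ) = ((k * (3 * k + 1) : ℕ) : ℤ) := by rw [pent1_spec k]
  push_cast at h
  linear_combination h

lemma pent2_specZ (k : ℕ) : 2 * (pent2 k : ℤ) = (k : ℤ) * (3 * k - 1) := by
  have h : ((2 * pent2 k + 2 * k : ℕ) : ℤ) = ((k * (3 * k + 1) : ℕ) : ℤ) := by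
    rw [pent2_spec k]
  push_cast at h
  linear_combination h

lemma pentCoeff_expand (m j : ℕ) (hj : j ≤ m) :
    pentCoeff (j : ℤ) =
      ∑ k ∈ Finset.range (m + 1),
        ((if j = pent1 k then (-1 : ℤ) ^ k else 0) +
         (if j = pent2 k ∧ 1 ≤ k then (-1 : ℤ) ^ k else 0)) := by
  rw [pentCoeff, Int.toNat_natCast]
  rw [← Finset.sum_subset (Finset.range_subset_range.2 (by omega : j + 1 ≤ m + 1))]
  · apply Finset.sum_congr rfl
    intro k _
    congr 1
    · refine if_congr ?_ rfl rfl
      rw [← pent1_specZ k]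
      constructor
      · intro h
        have : (j : ℤ) = (pent1 k : ℤ) := by linarith
        exact_mod_cast this
      · intro h; rw [h]
    · refine if_congr (and_congr ?_ Iff.rfl) rfl rfl
      rw [← pent2_specZ k]
      constructor
      · intro h
        have : (j : ℤ) = (pent2 k : ℤ) := by linarith
        exact_mod_cast this
      · intro h; rw [h]
  · intro k hk1 hk2
    have hjk : j < k := by
      simp only [Finset.mem_range] at hk1 hk2; omega
    have g1 := pent1_ge k
    rw [if_neg, if_neg, add_zero]
    · rintro ⟨h1, h2⟩
      have g2 := pent2_ge k h2
      have : (j : ℤ) = (pent2 k : ℤ) := by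
        have := pent2_specZ k; linarith
      have : j = pent2 k := by exact_mod_cast this
      omega
    · intro h1
      have : (j : ℤ) = (pent1 k : ℤ) := by
        have := pent1_specZ k; linarith
      have : j = pent1 k := by exact_mod_cast this
      omega

lemma sum_pick (m t : ℕ) (c : ℂ) (h : ℕ → ℂ) :
    ∑ j ∈ Finset.range (m + 1), (if j = t then c else 0) * h j
      = if t ≤ m then c * h t else 0 := by
  simp [ite_mul, Finset.sum_ite_eq', Nat.lt_succ_iff]

lemma sum_pick₂ (m t : ℕ) (q : Prop) [Decidable q] (c : ℂ) (h : ℕ → ℂ) :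
    ∑ j ∈ Finset.range (m + 1), (if j = t ∧ q then c else 0) * h j
      = if t ≤ m ∧ q then c * h t else 0 := by
  by_cases hq : q
  · simp only [hq, and_true]; exact sum_pick m t c h
  · simp [hq]

lemma step1 (f : ℕ → ℂ) (m : ℕ) :
    ∑ j ∈ Finset.range (m + 1), (pentCoeff (j : ℤ) : ℂ) * gf f ((m : ℤ) + 1 - (j : ℕ)) =
      Bgf f m := by
  set h : ℕ → ℂ := fun j => gf f ((m : ℤ) + 1 - (j : ℕ)) with hh
  have LHSeq : ∑ j ∈ Finset.range (m + 1), (pentCoeff (j : ℤ) : ℂ) * h j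
      = ∑ k ∈ Finset.range (m + 1),
          ((if pent1 k ≤ m then (-1 : ℂ) ^ k * h (pent1 k) else 0) +
           (if pent2 k ≤ m ∧ 1 ≤ k then (-1 : ℂ) ^ k * h (pent2 k) else 0)) := by
    calc ∑ j ∈ Finset.range (m + 1), (pentCoeff (j : ℤ) : ℂ) * h j
        = ∑ j ∈ Finset.range (m + 1), ∑ k ∈ Finset.range (m + 1),
            (((if j = pent1 k then (-1 : ℂ) ^ k else 0) +
              (if j = pent2 k ∧ 1 ≤ k then (-1 : ℂ) ^ k else 0)) * h j) := by
          apply Finset.sum_congr rfl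
          intro j hj
          rw [pentCoeff_expand m j (by simpa [Nat.lt_succ_iff] using hj)]
          push_cast
          rw [Finset.sum_mul]
      _ = ∑ k ∈ Finset.range (m + 1), ∑ j ∈ Finset.range (m + 1),
            (((if j = pent1 k then (-1 : ℂ) ^ k else 0) +
              (if j = pent2 k ∧ 1 ≤ k then (-1 : ℂ) ^ k else 0)) * h j) :=
          Finset.sum_comm
      _ = _ := by
          apply Finset.sum_congr rfl
          intro k _
          simp only [add_mul]
          rw [Finset.sum_add_distrib, sum_pick m (pent1 k), sum_pick₂ m (pent2 k)]
  have negite : ∀ (c : Prop) [Decidable c] (a : ℂ), (if c then -a else 0) = -(if c then a else 0) := by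
    intro c _ a; split <;> simp
  have T : ∀ (p : ℕ → ℕ) (b : ℤ), (∀ k, 1 ≤ k → 2 * (p k : ℤ) = (k : ℤ) * (3 * k + b)) →
      (∑ k ∈ Finset.Icc 1 m, if (k : ℤ) * (3 * k + b) ≤ 2 * m then
          (-1 : ℂ) ^ (k + 1) * gf f ((m : ℤ) + 1 - (k : ℤ) * (3 * k + b) / 2) else 0)
        = -∑ k ∈ Finset.Icc 1 m, (if p k ≤ m then (-1 : ℂ) ^ k * h (p k) else 0) := by
    intro p b hp
    rw [← Finset.sum_neg_distrib]
    apply Finset.sum_congr rfl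
    intro k hk
    have hk1 : 1 ≤ k := (Finset.mem_Icc.1 hk).1
    have hs := hp k hk1
    rw [← hs, ← negite]
    have hcond : (2 * (p k : ℤ) ≤ 2 * m) = (p k ≤ m) := by
      apply propext; omega
    simp only [hcond]
    refine if_congr Iff.rfl ?_ rfl
    rw [Int.mul_ediv_cancel_left _ two_ne_zero, pow_succ, hh]
    ring
  have conv : ∀ (p : ℕ → ℕ),
      (∑ k ∈ Finset.Icc 1 m, if p k ≤ m then (-1 : ℂ) ^ k * h (p k) else 0)
        = ∑ i ∈ Finset.range m, (if p (i + 1) ≤ m then (-1 : ℂ) ^ (i + 1) * h (p (i + 1)) else 0) := by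
    intro p
    rw [← Finset.Ico_add_one_right_eq_Icc, Finset.sum_Ico_eq_sum_range]
    apply Finset.sum_congr (by norm_num)
    intro i _
    rw [Nat.add_comm 1 i]
  rw [LHSeq, Bgf, Finset.sum_pair (by norm_num : (1 : ℤ) ≠ -1),
    T pent1 1 (fun k _ => pent1_specZ k), T pent2 (-1) (fun k _ => by rw [pent2_specZ k]; ring),
    conv pent1, conv pent2]
  rw [Finset.sum_range_succ']
  have hF0 : ((if pent1 0 ≤ m then (-1 : ℂ) ^ 0 * h (pent1 0) else 0) +
      (if pent2 0 ≤ m ∧ 1 ≤ 0 then (-1 : ℂ) ^ 0 * h (pent2 0) else 0)) = gf f ((m : ℤ) + 1) := by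
    have h10 : pent1 0 = 0 := rfl
    simp [h10, hh]
  rw [hF0]
  have hsplit : ∀ i ∈ Finset.range m,
      ((if pent1 (i + 1) ≤ m then (-1 : ℂ) ^ (i + 1) * h (pent1 (i + 1)) else 0) +
        (if pent2 (i + 1) ≤ m ∧ 1 ≤ i + 1 then (-1 : ℂ) ^ (i + 1) * h (pent2 (i + 1)) else 0))
      = ((if pent1 (i + 1) ≤ m then (-1 : ℂ) ^ (i + 1) * h (pent1 (i + 1)) else 0) +
        (if pent2 (i + 1) ≤ m then (-1 : ℂ) ^ (i + 1) * h (pent2 (i + 1)) else 0)) := by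
    intro i _
    congr 1
    exact if_congr (and_iff_left (by omega)) rfl rfl
  rw [Finset.sum_congr rfl hsplit, Finset.sum_add_distrib]
  ring

lemma key (f : ℕ → ℂ) (m : ℕ) :
    ∑ j ∈ Finset.range (m + 1), (aEnt (m + 1) (j + 1) : ℂ) * f (j + 1) = Bgf f m := by
  rw [← step1 f m]
  have RHS : ∀ j ∈ Finset.range (m + 1),
      (pentCoeff (j : ℤ) : ℂ) * gf f ((m : ℤ) + 1 - (j : ℕ))
        = ∑ d ∈ (m + 1 - j).divisors, (pentCoeff (j : ℤ) : ℂ) * f d := by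
    intro j hj
    have hj' : j ≤ m := by simpa [Nat.lt_succ_iff] using hj
    have h1 : (1 : ℤ) ≤ (m : ℤ) + 1 - j := by omega
    have h2 : ((m : ℤ) + 1 - j).toNat = m + 1 - j := by omega
    rw [gf, if_pos h1, h2, Finset.mul_sum]
  have LHS : ∀ j ∈ Finset.range (m + 1),
      (aEnt (m + 1) (j + 1) : ℂ) * f (j + 1)
        = ∑ s ∈ Finset.range ((m + 1) / (j + 1)),
            (pentCoeff ((m : ℤ) + 1 - ((s : ℤ) + 1) * ((j : ℤ) + 1)) : ℂ) * f (j + 1) := by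
    intro j _
    rw [aEnt]
    push_cast
    rw [Finset.sum_mul]
  rw [Finset.sum_congr rfl RHS, Finset.sum_congr rfl LHS,
    Finset.sum_sigma', Finset.sum_sigma']
  refine Finset.sum_nbij'
    (fun x => ⟨m + 1 - (x.2 + 1) * (x.1 + 1), x.1 + 1⟩)
    (fun y => ⟨y.2 - 1, (m + 1 - y.1) / y.2 - 1⟩) ?_ ?_ ?_ ?_ ?_
  · rintro ⟨j, s⟩ hmem
    simp only [Finset.mem_sigma, Finset.mem_range, Nat.mem_divisors] at hmem ⊢
    obtain ⟨hj, hs⟩ := hmem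
    have hP : (s + 1) * (j + 1) ≤ m + 1 := by
      calc (s + 1) * (j + 1) ≤ ((m + 1) / (j + 1)) * (j + 1) := Nat.mul_le_mul_right _ hs
        _ ≤ m + 1 := Nat.div_mul_le_self _ _
    have hP1 : 1 ≤ (s + 1) * (j + 1) := Nat.one_le_iff_ne_zero.2 (by positivity)
    refine ⟨by omega, ?_⟩
    have h1 : m + 1 - (m + 1 - (s + 1) * (j + 1)) = (s + 1) * (j + 1) := by omega
    rw [h1]
    exact ⟨dvd_mul_left _ _, by omega⟩
  · rintro ⟨j', d⟩ hmem
    simp only [Finset.mem_sigma, Finset.mem_range, Nat.mem_divisors] at hmem ⊢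
    obtain ⟨hj', hdvd, hne⟩ := hmem
    have hdpos : 0 < d := Nat.pos_of_dvd_of_pos hdvd (Nat.pos_of_ne_zero hne)
    have hdle : d ≤ m + 1 - j' := Nat.le_of_dvd (Nat.pos_of_ne_zero hne) hdvd
    have hqpos : 1 ≤ (m + 1 - j') / d := (Nat.one_le_div_iff hdpos).2 hdle
    refine ⟨by omega, ?_⟩
    have hd1 : d - 1 + 1 = d := by omega
    rw [hd1]
    have hmono : (m + 1 - j') / d ≤ (m + 1) / d := Nat.div_le_div_right (by omega)
    omega
  · rintro ⟨j, s⟩ hmem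
    simp only [Finset.mem_sigma, Finset.mem_range] at hmem
    obtain ⟨hj, hs⟩ := hmem
    have hP : (s + 1) * (j + 1) ≤ m + 1 := by
      calc (s + 1) * (j + 1) ≤ ((m + 1) / (j + 1)) * (j + 1) := Nat.mul_le_mul_right _ hs
        _ ≤ m + 1 := Nat.div_mul_le_self _ _
    have h1 : m + 1 - (m + 1 - (s + 1) * (j + 1)) = (s + 1) * (j + 1) := by omega
    have e2 : (m + 1 - (m + 1 - (s + 1) * (j + 1))) / (j + 1 - 1 + 1) - 1 = s := by
      have hj1 : j + 1 - 1 + 1 = j + 1 := by omega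
      rw [hj1, h1, Nat.mul_div_cancel _ (by omega : 0 < j + 1)]
      omega
    show (⟨j + 1 - 1, (m + 1 - (m + 1 - (s + 1) * (j + 1))) / (j + 1 - 1 + 1) - 1⟩
        : Σ _ : ℕ, ℕ) = ⟨j, s⟩
    rw [e2]
    norm_num
  · rintro ⟨j', d⟩ hmem
    simp only [Finset.mem_sigma, Finset.mem_range, Nat.mem_divisors] at hmem
    obtain ⟨hj', hdvd, hne⟩ := hmem
    have hdpos : 0 < d := Nat.pos_of_dvd_of_pos hdvd (Nat.pos_of_ne_zero hne)
    have hdle : d ≤ m + 1 - j' := Nat.le_of_dvd (Nat.pos_of_ne_zero hne) hdvd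
    have hq : (m + 1 - j') / d * d = m + 1 - j' := Nat.div_mul_cancel hdvd
    have hqpos : 1 ≤ (m + 1 - j') / d := (Nat.one_le_div_iff hdpos).2 hdle
    have hd1 : d - 1 + 1 = d := by omega
    have hq1 : (m + 1 - j') / d - 1 + 1 = (m + 1 - j') / d := by omega
    show (⟨m + 1 - ((m + 1 - j') / d - 1 + 1) * (d - 1 + 1), d - 1 + 1⟩
        : Σ _ : ℕ, ℕ) = ⟨j', d⟩
    rw [hd1, hq1, hq]
    have : m + 1 - (m + 1 - j') = j' := by omega
    rw [this]
  · rintro ⟨j, s⟩ hmem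
    simp only [Finset.mem_sigma, Finset.mem_range] at hmem
    obtain ⟨hj, hs⟩ := hmem
    have hP : (s + 1) * (j + 1) ≤ m + 1 := by
      calc (s + 1) * (j + 1) ≤ ((m + 1) / (j + 1)) * (j + 1) := Nat.mul_le_mul_right _ hs
        _ ≤ m + 1 := Nat.div_mul_le_self _ _
    show (pentCoeff ((m : ℤ) + 1 - ((s : ℤ) + 1) * ((j : ℤ) + 1)) : ℂ) * f (j + 1)
        = (pentCoeff ((m + 1 - (s + 1) * (j + 1) : ℕ) : ℤ) : ℂ) * f (j + 1)
    have hc : ((m + 1 - (s + 1) * (j + 1) : ℕ) : ℤ)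
        = (m : ℤ) + 1 - ((s : ℤ) + 1) * ((j : ℤ) + 1) := by
      have hcast : (((s + 1) * (j + 1) : ℕ) : ℤ) = ((s : ℤ) + 1) * ((j : ℤ) + 1) := by
        push_cast; ring
      omega
    rw [hc]

lemma pentCoeff_zero : pentCoeff 0 = 1 := by decide

lemma aEnt_diag (i : ℕ) : aEnt (i + 1) (i + 1) = 1 := by
  simp [aEnt, pentCoeff_zero]

lemma Amat_det (n : ℕ) : (Amat n).det = 1 := by
  rw [Matrix.det_of_lowerTriangular (Amat n)]
  · simp [Amat, aEnt_diag]
  · intro i j h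
    simp only [Amat, if_neg (by simpa using h : ¬ (j : ℕ) ≤ (i : ℕ))]

lemma Amat_isUnit (n : ℕ) : IsUnit (Amat n) := by
  rw [Matrix.isUnit_iff_isUnit_det, Amat_det]; exact isUnit_one

theorem statement1 (f : ℕ → ℂ) (n : ℕ) (hn : 1 ≤ n) :
    IsUnit (Amat n) ∧
      (Amat n).mulVec (fun i => f ((i : ℕ) + 1)) = (fun m : Fin n => Bgf f (m : ℕ)) ∧
      (fun i : Fin n => f ((i : ℕ) + 1)) = (Amat n)⁻¹.mulVec (fun m : Fin n => Bgf f (m : ℕ)) := by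
  have main : (Amat n).mulVec (fun i => f ((i : ℕ) + 1)) = fun m : Fin n => Bgf f (m : ℕ) := by
    funext m
    have hm : (m : ℕ) < n := m.2
    show ∑ j : Fin n, Amat n m j * f ((j : ℕ) + 1) = Bgf f (m : ℕ)
    calc ∑ j : Fin n, Amat n m j * f ((j : ℕ) + 1)
        = ∑ j ∈ Finset.range n,
            (if j ≤ (m : ℕ) then (aEnt ((m : ℕ) + 1) (j + 1) : ℂ) else 0) * f (j + 1) := by
          rw [← Fin.sum_univ_eq_sum_range (fun j =>
            (if j ≤ (m : ℕ) then (aEnt ((m : ℕ) + 1) (j + 1) : ℂ) else 0) * f (j + 1)) n]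
          rfl
      _ = ∑ j ∈ Finset.range ((m : ℕ) + 1),
            (if j ≤ (m : ℕ) then (aEnt ((m : ℕ) + 1) (j + 1) : ℂ) else 0) * f (j + 1) := by
          refine (Finset.sum_subset (Finset.range_subset_range.2 (by omega)) ?_).symm
          intro j _ hj
          rw [Finset.mem_range] at hj
          rw [if_neg (by omega), zero_mul]
      _ = ∑ j ∈ Finset.range ((m : ℕ) + 1), (aEnt ((m : ℕ) + 1) (j + 1) : ℂ) * f (j + 1) := by
          apply Finset.sum_congr rfl
          intro j hj
          rw [Finset.mem_range] at hj
          rw [if_pos (by omega)]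
      _ = Bgf f (m : ℕ) := key f (m : ℕ)
  refine ⟨Amat_isUnit n, main, ?_⟩
  rw [← main, Matrix.mulVec_mulVec, Matrix.nonsing_inv_mul _ (by rw [Amat_det]; exact isUnit_one),
    Matrix.one_mulVec]
end

section
/- Let f : ℤ⁺ → ℂ be an arbitrary arithmetic function and define the average-order partial sums Σ_{g_f,x} := Σ_{1 ≤ n ≤ x} g_f(n) for x ≥ 1, with Σ_{g_f,x} := 0 for x ≤ 0. Then for every integer n ≥ 1, Σ_{g_f,n+1} = Σ_{b∈{1,−1}} Σ_{k ≥ 1, k(3k+b)/2 ≤ n+1} (−1)^{k+1} Σ_{g_f,n+1−k(3k+b)/2} + Σ_{k=1}^{n+1} a_f(k). -/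
/-- `a_f(n) := ∑_{i=1}^n f(i) a_{n,i}`. -/
noncomputable def af (f : ℕ → ℂ) (n : ℕ) : ℂ :=
  ∑ i ∈ Finset.Icc 1 n, f i * (aEnt n i : ℂ)

/-- The average-order partial sums `Σ_{g_f,x} := ∑_{1 ≤ n ≤ x} g_f(n)` for `x ≥ 1`,
with value `0` for `x ≤ 0`. -/
noncomputable def Sgf (f : ℕ → ℂ) (x : ℤ) : ℂ :=
  ∑ n ∈ Finset.Icc 1 x.toNat, gf f (n : ℤ)

open Finset

lemma gf_natcast (f : ℕ → ℂ) (m : ℕ) (hm : 1 ≤ m) :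
    gf f (m : ℤ) = ∑ d ∈ m.divisors, f d := by
  rw [gf, if_pos (by exact_mod_cast hm)]
  simp

lemma af_eq (f : ℕ → ℂ) (k : ℕ) :
    af f k = ∑ m ∈ Icc 1 k, (pentCoeff ((k:ℤ) - m) : ℂ) * gf f m := by
  have hR : ∀ m ∈ Icc 1 k, (pentCoeff ((k:ℤ) - m) : ℂ) * gf f m
      = ∑ d ∈ m.divisors, (pentCoeff ((k:ℤ) - m) : ℂ) * f d := by
    intro m hm
    rw [gf_natcast f m (mem_Icc.mp hm).1, Finset.mul_sum]
  rw [Finset.sum_congr rfl hR, af]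
  simp only [aEnt, Int.cast_sum, Finset.mul_sum]
  rw [Finset.sum_sigma', Finset.sum_sigma']
  refine Finset.sum_nbij' (fun p => ⟨(p.2 + 1) * p.1, p.1⟩) (fun q => ⟨q.2, q.1 / q.2 - 1⟩)
    ?_ ?_ ?_ ?_ ?_
  · rintro ⟨i, s⟩ hp
    simp only [mem_sigma, mem_Icc, mem_range] at hp ⊢
    obtain ⟨⟨hi1, hik⟩, hs⟩ := hp
    have hi0 : 0 < i := hi1
    have hle : (s + 1) * i ≤ k := (Nat.le_div_iff_mul_le hi0).mp hs
    refine ⟨⟨Nat.one_le_iff_ne_zero.mpr (by positivity), hle⟩, ?_⟩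
    exact Nat.mem_divisors.mpr ⟨⟨s+1, by ring⟩, by positivity⟩
  · rintro ⟨m, d⟩ hq
    simp only [mem_sigma, mem_Icc, mem_range] at hq ⊢
    obtain ⟨⟨hm1, hmk⟩, hd⟩ := hq
    obtain ⟨hdvd, hm0⟩ := Nat.mem_divisors.mp hd
    have hd0 : 0 < d := Nat.pos_of_dvd_of_pos hdvd hm1
    have h1 : 1 ≤ m / d := Nat.one_le_div_iff hd0 |>.mpr (Nat.le_of_dvd hm1 hdvd)
    refine ⟨⟨hd0, le_trans (Nat.le_of_dvd hm1 hdvd) hmk⟩, ?_⟩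
    have : m / d ≤ k / d := Nat.div_le_div_right hmk
    omega
  · rintro ⟨i, s⟩ hp
    simp only [mem_sigma, mem_Icc, mem_range] at hp
    have hi0 : 0 < i := hp.1.1
    have : (s + 1) * i / i = s + 1 := Nat.mul_div_cancel _ hi0
    simp [this]
  · rintro ⟨m, d⟩ hq
    simp only [mem_sigma, mem_Icc, mem_range] at hq
    obtain ⟨hdvd, hm0⟩ := Nat.mem_divisors.mp hq.2
    have hd0 : 0 < d := Nat.pos_of_dvd_of_pos hdvd hq.1.1
    have h1 : 1 ≤ m / d := Nat.one_le_div_iff hd0 |>.mpr (Nat.le_of_dvd hq.1.1 hdvd)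
    have : (m / d - 1 + 1) * d = m := by
      rw [Nat.sub_add_cancel h1, Nat.div_mul_cancel hdvd]
    simp [this]
  · rintro ⟨i, s⟩ hp
    simp only [mem_sigma, mem_Icc, mem_range] at hp
    push_cast
    ring

lemma sum_af (f : ℕ → ℂ) (N : ℕ) :
    ∑ k ∈ Icc 1 N, af f k = ∑ j ∈ range N, (pentCoeff (j:ℤ) : ℂ) * Sgf f ((N:ℤ) - j) := by
  have hS : ∀ j ∈ range N, (pentCoeff (j:ℤ) : ℂ) * Sgf f ((N:ℤ) - j)
      = ∑ m ∈ Icc 1 (N - j), (pentCoeff (j:ℤ) : ℂ) * gf f m := by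
    intro j _
    rw [Sgf, Finset.mul_sum]
    have h : ((N:ℤ) - (j:ℤ)).toNat = N - j := by omega
    rw [h]
  rw [Finset.sum_congr rfl hS, Finset.sum_congr rfl (fun k _ => af_eq f k)]
  rw [Finset.sum_sigma', Finset.sum_sigma']
  refine Finset.sum_nbij' (fun p => ⟨p.1 - p.2, p.2⟩) (fun q => ⟨q.1 + q.2, q.2⟩) ?_ ?_ ?_ ?_ ?_
  · rintro ⟨k, m⟩ hp
    simp only [mem_sigma, mem_Icc, mem_range] at hp ⊢
    omega
  · rintro ⟨j, m⟩ hq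
    simp only [mem_sigma, mem_Icc, mem_range] at hq ⊢
    omega
  · rintro ⟨k, m⟩ hp
    simp only [mem_sigma, mem_Icc, mem_range] at hp
    simp only [Sigma.mk.inj_iff, heq_eq_eq, and_true]
    omega
  · rintro ⟨j, m⟩ hq
    simp only [mem_sigma, mem_Icc, mem_range] at hq
    simp only [Sigma.mk.inj_iff, heq_eq_eq, and_true]
    omega
  · rintro ⟨k, m⟩ hp
    simp only [mem_sigma, mem_Icc, mem_range] at hp
    have : ((k - m : ℕ) : ℤ) = (k:ℤ) - m := by omega
    simp [this]

lemma pent_bound {j k : ℕ} {b : ℤ} (hb : b = 1 ∨ b = -1) (hj : 1 ≤ j)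
    (h : 2*(j:ℤ) = (k:ℤ)*(3*(k:ℤ)+b)) : 1 ≤ k ∧ k ≤ j := by
  constructor
  · rcases Nat.eq_zero_or_pos k with rfl | h1
    · rcases hb with rfl | rfl <;> simp at h <;> omega
    · exact h1
  · by_contra hlt
    push_neg at hlt
    have hk : (j:ℤ) + 1 ≤ (k:ℤ) := by exact_mod_cast hlt
    rcases hb with rfl | rfl <;> nlinarith [sq_nonneg ((k:ℤ) - 1), hk]

lemma pentCoeff_eq (j N : ℕ) (hj1 : 1 ≤ j) (hjN : j ≤ N) :
    pentCoeff (j:ℤ) =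
      ∑ b ∈ ({1,-1} : Finset ℤ), ∑ k ∈ Icc 1 N,
        (if 2*(j:ℤ) = (k:ℤ)*(3*(k:ℤ)+b) then (-1:ℤ)^k else 0) := by
  have hins : ({1,-1} : Finset ℤ) = insert 1 {-1} := rfl
  rw [hins, Finset.sum_insert (by decide), Finset.sum_singleton]
  have key : ∀ b : ℤ, b = 1 ∨ b = -1 →
      ∑ k ∈ Icc 1 N, (if 2*(j:ℤ) = (k:ℤ)*(3*(k:ℤ)+b) then (-1:ℤ)^k else 0)
      = ∑ k ∈ range (j+1), (if 2*(j:ℤ) = (k:ℤ)*(3*(k:ℤ)+b) then (-1:ℤ)^k else 0) := by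
    intro b hb
    have h1 := Finset.sum_subset (s₁ := Icc 1 N) (s₂ := range (N+1))
      (f := fun k => if 2*(j:ℤ) = (k:ℤ)*(3*(k:ℤ)+b) then (-1:ℤ)^k else 0)
      (fun x hx => by simp only [mem_Icc, mem_range] at hx ⊢; omega)
      (fun x hx hx' => by
        simp only [mem_Icc, mem_range] at hx hx'
        simp only [ite_eq_right_iff]
        intro hc
        have := (pent_bound hb hj1 hc).1
        omega)
    have h2 := Finset.sum_subset (s₁ := range (j+1)) (s₂ := range (N+1))
      (f := fun k => if 2*(j:ℤ) = (k:ℤ)*(3*(k:ℤ)+b) then (-1:ℤ)^k else 0)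
      (fun x hx => by simp only [mem_range] at hx ⊢; omega)
      (fun x hx hx' => by
        simp only [mem_range] at hx hx'
        simp only [ite_eq_right_iff]
        intro hc
        have := (pent_bound hb hj1 hc).2
        omega)
    rw [h1, ← h2]
  rw [key 1 (Or.inl rfl), key (-1) (Or.inr rfl)]
  rw [pentCoeff]
  have ht : ((j:ℤ)).toNat = j := by omega
  rw [ht, Finset.sum_add_distrib]
  congr 1
  apply Finset.sum_congr rfl
  intro k _
  by_cases hc : 2*(j:ℤ) = (k:ℤ)*(3*(k:ℤ)+(-1))
  · rw [if_pos hc]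
    have hk1 := (pent_bound (Or.inr rfl) hj1 hc).1
    rw [if_pos ⟨by linarith, hk1⟩]
  · rw [if_neg hc, if_neg (fun h => hc (by linarith [h.1]))]

lemma pent_part (f : ℕ → ℂ) (N : ℕ) (hN : 1 ≤ N) :
    (∑ b ∈ ({1,-1} : Finset ℤ), ∑ k ∈ Icc 1 N,
      if (k:ℤ)*(3*(k:ℤ)+b) ≤ 2*(N:ℤ) then
        (-1:ℂ)^(k+1) * Sgf f ((N:ℤ) - (k:ℤ)*(3*(k:ℤ)+b)/2) else 0)
    = - ∑ j ∈ Icc 1 N, (pentCoeff (j:ℤ) : ℂ) * Sgf f ((N:ℤ) - j) := by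
  have step1 : ∀ b ∈ ({1,-1} : Finset ℤ), ∀ k ∈ Icc 1 N,
      (if (k:ℤ)*(3*(k:ℤ)+b) ≤ 2*(N:ℤ) then
        (-1:ℂ)^(k+1) * Sgf f ((N:ℤ) - (k:ℤ)*(3*(k:ℤ)+b)/2) else 0)
      = ∑ j ∈ Icc 1 N, (if 2*(j:ℤ) = (k:ℤ)*(3*(k:ℤ)+b)
          then (-1:ℂ)^(k+1) * Sgf f ((N:ℤ) - j) else 0) := by
    intro b hb k hk
    have hb' : b = 1 ∨ b = -1 := by
      simpa [Finset.mem_insert, Finset.mem_singleton] using hb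
    simp only [mem_Icc] at hk
    have hk1 : (1:ℤ) ≤ (k:ℤ) := by exact_mod_cast hk.1
    obtain ⟨j0, hj0⟩ : ∃ j0 : ℤ, (k:ℤ)*(3*(k:ℤ)+b) = 2*j0 := by
      rcases Int.even_or_odd (k:ℤ) with ⟨t, ht⟩ | ⟨t, ht⟩
      · exact ⟨t*(3*(k:ℤ)+b), by rw [ht]; ring⟩
      · rcases hb' with rfl | rfl
        · exact ⟨(k:ℤ)*(3*t+2), by rw [ht]; ring⟩
        · exact ⟨(k:ℤ)*(3*t+1), by rw [ht]; ring⟩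
    have hj0pos : 1 ≤ j0 := by
      rcases hb' with rfl | rfl <;> nlinarith [hj0, hk1]
    by_cases hC : (k:ℤ)*(3*(k:ℤ)+b) ≤ 2*(N:ℤ)
    · have hj0N : j0 ≤ N := by omega
      set j1 := j0.toNat with hj1def
      have hj1 : (j1:ℤ) = j0 := Int.toNat_of_nonneg (by omega)
      have hmem : j1 ∈ Icc 1 N := by
        simp only [mem_Icc]
        omega
      rw [if_pos hC, Finset.sum_eq_single_of_mem j1 hmem]
      · rw [if_pos (by rw [hj1]; omega)]
        have : (k:ℤ)*(3*(k:ℤ)+b)/2 = j0 := by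
          rw [hj0]
          exact Int.mul_ediv_cancel_left j0 two_ne_zero
        rw [this, hj1]
      · intro j hjm hne
        rw [if_neg]
        intro hc
        apply hne
        simp only [hj0] at hc
        omega
    · rw [if_neg hC]
      symm
      apply Finset.sum_eq_zero
      intro j hj
      rw [if_neg]
      intro hc
      simp only [mem_Icc] at hj
      rw [← hc] at hC
      omega
  rw [Finset.sum_congr rfl (fun b hb => Finset.sum_congr rfl (step1 b hb))]
  rw [Finset.sum_congr rfl (fun b _ => Finset.sum_comm), Finset.sum_comm]
  rw [← Finset.sum_neg_distrib]
  apply Finset.sum_congr rfl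
  intro j hj
  simp only [mem_Icc] at hj
  have hcast : (pentCoeff (j:ℤ) : ℂ) =
      ∑ b ∈ ({1,-1} : Finset ℤ), ∑ k ∈ Icc 1 N,
        (if 2*(j:ℤ) = (k:ℤ)*(3*(k:ℤ)+b) then (-1:ℂ)^k else 0) := by
    rw [pentCoeff_eq j N hj.1 hj.2]
    push_cast [apply_ite (Int.cast : ℤ → ℂ)]
    rfl
  calc ∑ b ∈ ({1,-1} : Finset ℤ), ∑ k ∈ Icc 1 N,
        (if 2*(j:ℤ) = (k:ℤ)*(3*(k:ℤ)+b) then (-1:ℂ)^(k+1) * Sgf f ((N:ℤ) - j) else 0)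
      = (∑ b ∈ ({1,-1} : Finset ℤ), ∑ k ∈ Icc 1 N,
          (if 2*(j:ℤ) = (k:ℤ)*(3*(k:ℤ)+b) then (-1:ℂ)^(k+1) else 0)) * Sgf f ((N:ℤ) - j) := by
        rw [Finset.sum_mul]
        apply Finset.sum_congr rfl
        intro b _
        rw [Finset.sum_mul]
        apply Finset.sum_congr rfl
        intro k _
        split <;> simp
    _ = - ((pentCoeff (j:ℤ) : ℂ) * Sgf f ((N:ℤ) - j)) := by
        rw [hcast, ← neg_mul]
        congr 1
        rw [← Finset.sum_neg_distrib]
        apply Finset.sum_congr rfl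
        intro b _
        rw [← Finset.sum_neg_distrib]
        apply Finset.sum_congr rfl
        intro k _
        rw [pow_succ]
        split <;> simp

theorem statement2 (f : ℕ → ℂ) (n : ℕ) (hn : 1 ≤ n) :
    Sgf f ((n : ℤ) + 1) =
      (∑ b ∈ ({1, -1} : Finset ℤ), ∑ k ∈ Finset.Icc 1 (n + 1),
        if (k : ℤ) * (3 * k + b) ≤ 2 * ((n : ℤ) + 1) then
          (-1 : ℂ) ^ (k + 1) * Sgf f ((n : ℤ) + 1 - (k : ℤ) * (3 * k + b) / 2)
        else 0) +
      ∑ k ∈ Finset.Icc 1 (n + 1), af f k := by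
  have hc : (n:ℤ) + 1 = ((n + 1 : ℕ) : ℤ) := by push_cast; ring
  rw [hc]
  set N := n + 1 with hNdef
  have hN1 : 1 ≤ N := by omega
  rw [pent_part f N hN1, sum_af f N]
  have hsplit : range N = (range (N+1)).erase N := by
    ext x
    simp only [mem_range, Finset.mem_erase]
    omega
  have hNterm : (pentCoeff ((N:ℕ):ℤ) : ℂ) * Sgf f ((N:ℤ) - (N:ℕ)) = 0 := by
    have h0 : ((N:ℤ) - (N:ℕ)).toNat = 0 := by omega
    rw [Sgf, h0]
    simp
  have hrange : ∑ j ∈ range N, (pentCoeff (j:ℤ) : ℂ) * Sgf f ((N:ℤ) - j)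
      = ∑ j ∈ range (N+1), (pentCoeff (j:ℤ) : ℂ) * Sgf f ((N:ℤ) - j) := by
    conv_rhs => rw [Finset.sum_range_succ]
    rw [hNterm, add_zero]
  have hins : range (N+1) = insert 0 (Icc 1 N) := by
    ext x
    simp only [mem_range, Finset.mem_insert, mem_Icc]
    omega
  have hp0 : pentCoeff ((0:ℕ):ℤ) = 1 := by decide
  have h00 : (pentCoeff ((0:ℕ):ℤ) : ℂ) * Sgf f ((N:ℤ) - ((0:ℕ):ℤ)) = Sgf f (N:ℤ) := by
    rw [hp0]
    norm_num
  rw [hrange, hins, Finset.sum_insert (by simp), h00]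
  ring
end
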